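/- arXiv:1710.02847 — 2 statements merged into one kernel-verified Lean document; each statement's English description precedes it below -/
import Mathlib

section
/- Let H be a finite-dimensional real inner product space and A, B : H →L[ℝ] H be continuous linear maps. If for every y ∈ H, (⟨B (exp(tA) y), exp(tA) y⟩ = 0 for all t ≥ 0) implies y = 0, then there exist T > 0 and δ > 0 such that for all y ∈ H, ∫₀ᵀ |⟨B (exp(tA) y), exp(tA) y⟩| dt ≥ δ ‖y‖². -/
/-!
A trajectory on which the quadratic form vanishes for all `t ≥ 0` must be zero, so for each unit
vector `y` the continuous function `t ↦ ⟪B (exp (tA) y), exp (tA) y⟫` is nonzero somewhere on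
`[0, ∞)` and its absolute value has positive integral over some `[0, T_y]`. These integrals are
monotone in `T` and continuous in `y`, so compactness of the unit sphere yields one `T` that works
for every unit vector and a positive lower bound `δ` on the sphere. Since the integrand is
quadratic in `y`, the bound `δ ‖y‖²` follows for all `y`.
-/

open scoped RealInnerProductSpace
open MeasureTheory Set Metric

theorem intervalIntegral_abs_pos_of_ne_zero {g : ℝ → ℝ} {a b c : ℝ}
    (hg : ContinuousOn g (Icc a b)) (hab : a < b) (hc : c ∈ Icc a b) (hgc : g c ≠ 0) :
    0 < ∫ t in a..b, |g t| := by
  simpa using intervalIntegral.integral_lt_integral_of_continuousOn_of_le_of_exists_lt hab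
    continuousOn_const hg.abs (fun t _ => abs_nonneg (g t)) ⟨c, hc, abs_pos.2 hgc⟩

theorem exists_pos_mul_sq_norm_le_of_pos_on_sphere {E : Type*} [NormedAddCommGroup E]
    [NormedSpace ℝ E] [ProperSpace E] {g : E → ℝ} (hg : Continuous g)
    (hquad : ∀ (c : ℝ) (y : E), g (c • y) = c ^ 2 * g y)
    (hpos : ∀ y ∈ sphere (0 : E) 1, 0 < g y) :
    ∃ δ > 0, ∀ y, δ * ‖y‖ ^ 2 ≤ g y := by
  obtain ⟨δ, hδ, hδg⟩ := (isCompact_sphere (0 : E) 1).exists_forall_le' hg.continuousOn hpos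
  refine ⟨δ, hδ, fun y => ?_⟩
  rcases eq_or_ne y 0 with rfl | hy
  · simpa using (hquad 0 0).ge
  have hny : ‖y‖ ≠ 0 := norm_ne_zero_iff.2 hy
  have hunit : ‖y‖⁻¹ • y ∈ sphere (0 : E) 1 := by simp [norm_smul, hny]
  calc δ * ‖y‖ ^ 2 ≤ ‖y‖ ^ 2 * g (‖y‖⁻¹ • y) := by
        rw [mul_comm]; exact mul_le_mul_of_nonneg_left (hδg _ hunit) (by positivity)
    _ = g y := by rw [← hquad, smul_smul, mul_inv_cancel₀ hny, one_smul]

theorem IsCompact.exists_forall_intervalIntegral_abs_pos {X : Type*} [TopologicalSpace X]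
    {K : Set X} (hK : IsCompact K) {f : X → ℝ → ℝ} (hf : Continuous (Function.uncurry f))
    (hne : ∀ y ∈ K, ∃ t, 0 ≤ t ∧ f y t ≠ 0) :
    ∃ T > 0, ∀ y ∈ K, 0 < ∫ t in (0 : ℝ)..T, |f y t| := by
  set U : ℕ → Set X := fun n => {y | 0 < ∫ t in (0 : ℝ)..(n + 1), |f y t|}
  have hopen (n : ℕ) : IsOpen (U n) := isOpen_lt continuous_const <|
    intervalIntegral.continuous_parametric_intervalIntegral_of_continuous' hf.abs 0 _
  have hmono : Monotone U := by
    intro m n hmn y hy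
    refine hy.trans_le (intervalIntegral.integral_mono_interval le_rfl (by positivity)
      (by gcongr) (.of_forall fun t => abs_nonneg _) ?_)
    exact (hf.comp (Continuous.prodMk_right y)).abs.intervalIntegrable _ _
  have hcover : K ⊆ ⋃ n, U n := by
    intro y hy
    obtain ⟨t, ht, hft⟩ := hne y hy
    obtain ⟨n, hn⟩ := exists_nat_gt t
    exact mem_iUnion.2 ⟨n, intervalIntegral_abs_pos_of_ne_zero
      (hf.comp (Continuous.prodMk_right y)).continuousOn (by positivity) ⟨ht, by linarith⟩ hft⟩
  obtain ⟨n, hn⟩ := hK.elim_directed_cover U hopen hcover hmono.directed_le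
  exact ⟨n + 1, by positivity, hn⟩

theorem exists_pos_mul_sq_norm_le_intervalIntegral_abs {E : Type*} [NormedAddCommGroup E]
    [NormedSpace ℝ E] [ProperSpace E] {f : E → ℝ → ℝ} (hf : Continuous (Function.uncurry f))
    (hquad : ∀ (c : ℝ) (y : E) (t : ℝ), f (c • y) t = c ^ 2 * f y t)
    (hobs : ∀ y, (∀ t, 0 ≤ t → f y t = 0) → y = 0) :
    ∃ T > 0, ∃ δ > 0, ∀ y, δ * ‖y‖ ^ 2 ≤ ∫ t in (0 : ℝ)..T, |f y t| := by
  have hne : ∀ y ∈ sphere (0 : E) 1, ∃ t, 0 ≤ t ∧ f y t ≠ 0 := by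
    intro y hy
    by_contra! hzero
    exact ne_zero_of_mem_unit_sphere ⟨y, hy⟩ (hobs y hzero)
  obtain ⟨T, hT, hpos⟩ := (isCompact_sphere (0 : E) 1).exists_forall_intervalIntegral_abs_pos hf hne
  obtain ⟨δ, hδ, hδT⟩ := exists_pos_mul_sq_norm_le_of_pos_on_sphere
    (intervalIntegral.continuous_parametric_intervalIntegral_of_continuous' hf.abs 0 T)
    (fun c y => by simp only [hquad, abs_mul, abs_pow, sq_abs, intervalIntegral.integral_const_mul])
    hpos
  exact ⟨T, hT, δ, hδ, hδT⟩

theorem stmt_1 {H : Type*} [NormedAddCommGroup H] [InnerProductSpace ℝ H]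
    [FiniteDimensional ℝ H] (A B : H →L[ℝ] H)
    (hobs : ∀ y : H,
      (∀ t : ℝ, 0 ≤ t → ⟪B ((NormedSpace.exp (t • A)) y), (NormedSpace.exp (t • A)) y⟫ = 0) →
      y = 0) :
    ∃ T > (0 : ℝ), ∃ δ > (0 : ℝ), ∀ y : H,
      δ * ‖y‖ ^ 2 ≤
        ∫ t in (0 : ℝ)..T, |⟪B ((NormedSpace.exp (t • A)) y), (NormedSpace.exp (t • A)) y⟫| := by
  have hexp : Continuous fun t : ℝ => NormedSpace.exp (t • A) :=
    continuous_iff_continuousAt.2 fun t => (hasDerivAt_exp_smul_const A t).continuousAt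
  have htraj : Continuous fun p : H × ℝ => NormedSpace.exp (p.2 • A) p.1 :=
    (hexp.comp continuous_snd).clm_apply continuous_fst
  refine exists_pos_mul_sq_norm_le_intervalIntegral_abs
    ((B.continuous.comp htraj).inner htraj) (fun c y t => ?_) hobs
  simp only [map_smul, real_inner_smul_left, real_inner_smul_right]
  ring
end

section
/- Let H = ℝ, A = 0, and B(z) = |z|. Then the observability-type estimate ∫₀ᵀ ‖B(e^{tA} y)‖ dt ≥ δ‖y‖ holds (with T = δ = 1), yet for every constant λ ∈ ℝ the closed-loop equation ż = -λ|z| admits, for a suitable sign of initial data, solutions that do not converge exponentially to 0. Concretely: for λ > 0 and z₀ < 0 the solution z(t) = z₀ e^{λ t} diverges, and for λ ≤ 0 and z₀ > 0 the solution does not decay. -/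
open Filter

theorem stmt_5 :
    -- B z = |z|, A = 0, so e^{tA} y = y; the observability estimate holds with T = δ = 1
    (∀ y : ℝ, 1 * |y| ≤ ∫ _t in (0 : ℝ)..1, |y|) ∧
    -- for λ > 0 and z₀ < 0, z(t) = z₀ e^{λ t} solves ż = -λ|z| and diverges
    (∀ lam : ℝ, 0 < lam → ∀ z₀ : ℝ, z₀ < 0 →
      (∀ t : ℝ, HasDerivAt (fun t : ℝ => z₀ * Real.exp (lam * t))
          (-lam * |z₀ * Real.exp (lam * t)|) t) ∧
      ¬ Tendsto (fun t : ℝ => z₀ * Real.exp (lam * t)) atTop (nhds 0)) ∧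
    -- for λ ≤ 0 and z₀ > 0, z(t) = z₀ e^{-λ t} solves ż = -λ|z| and does not decay
    (∀ lam : ℝ, lam ≤ 0 → ∀ z₀ : ℝ, 0 < z₀ →
      (∀ t : ℝ, HasDerivAt (fun t : ℝ => z₀ * Real.exp (-lam * t))
          (-lam * |z₀ * Real.exp (-lam * t)|) t) ∧
      ¬ Tendsto (fun t : ℝ => z₀ * Real.exp (-lam * t)) atTop (nhds 0)) := by
  refine ⟨fun y => by simp, ?_, ?_⟩
  · intro lam hlam z₀ hz₀
    constructor
    · intro t
      have h : HasDerivAt (fun t : ℝ => z₀ * Real.exp (lam * t))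
          (z₀ * (Real.exp (lam * t) * lam)) t := by
        simpa using (((hasDerivAt_id t).const_mul lam).exp).const_mul z₀
      convert h using 1
      have : z₀ * Real.exp (lam * t) < 0 :=
        mul_neg_of_neg_of_pos hz₀ (Real.exp_pos _)
      rw [abs_of_neg this]; ring
    · intro h
      have hlt := (h.eventually (eventually_abs_sub_lt 0 (abs_pos.2 (by linarith))))
      rw [eventually_atTop] at hlt
      obtain ⟨N, hN⟩ := hlt
      have := hN (max N 0) (le_max_left _ _)
      have h1 : (1:ℝ) ≤ Real.exp (lam * max N 0) :=
        Real.one_le_exp (by positivity)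
      rw [sub_zero, abs_mul, Real.abs_exp] at this
      nlinarith [abs_pos.2 (ne_of_lt hz₀)]
  · intro lam hlam z₀ hz₀
    constructor
    · intro t
      have h : HasDerivAt (fun t : ℝ => z₀ * Real.exp (-lam * t))
          (z₀ * (Real.exp (-lam * t) * -lam)) t := by
        simpa using (((hasDerivAt_id t).const_mul (-lam)).exp).const_mul z₀
      convert h using 1
      have : 0 < z₀ * Real.exp (-lam * t) :=
        mul_pos hz₀ (Real.exp_pos _)
      rw [abs_of_pos this]; ring
    · intro h
      have hlt := (h.eventually (eventually_abs_sub_lt 0 (abs_pos.2 (by linarith))))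
      rw [eventually_atTop] at hlt
      obtain ⟨N, hN⟩ := hlt
      have := hN (max N 0) (le_max_left _ _)
      have h1 : (1:ℝ) ≤ Real.exp (-lam * max N 0) := by
        apply Real.one_le_exp
        have : 0 ≤ -lam := by linarith
        positivity
      rw [sub_zero, abs_mul, Real.abs_exp] at this
      nlinarith [abs_pos.2 (ne_of_gt hz₀)]
end
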